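/- arXiv:0904.3344 — 3 statements merged into one kernel-verified Lean document; each statement's English description precedes it below -/
import Mathlib

section
/- Let φ_n : R[[z]] → R[[z]] be the linear map sending ∑ a_i z^i to ∑ a_{in} z^i. Then for any formal power series R(z) = ∑ r_j z^j and natural numbers k < n, applying the map Ψ_{1,n} (which sends ∑ a_{i,j} t^i z^j to ∑_i a_{i,in} z^i) to R(z)/(1 - t z^k) yields φ_{n-k}(R(z)) = ∑_{s≥0} r_{s(n-k)} z^s. -/
open PowerSeries

/-- `Ψ_{1,n}` sends a two-variable series `∑ a_{i,j} t^i z^j` (variable `0` is `t`,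
variable `1` is `z`) to `∑_i a_{i,i·n} z^i`. -/
noncomputable def Psi {R : Type*} [CommRing R] (n : ℕ) (F : MvPowerSeries (Fin 2) R) :
    PowerSeries R :=
  PowerSeries.mk fun i => MvPowerSeries.coeff (R := R) (Finsupp.single 0 i + Finsupp.single 1 (i * n)) F

/-- The two-variable series `∑_j r_j z^j` (no `t`). -/
noncomputable def zSeries {R : Type*} [CommRing R] (r : ℕ → R) : MvPowerSeries (Fin 2) R :=
  fun d => if d 0 = 0 then r (d 1) else 0

/-- The geometric series `1/(1 - t z^k) = ∑_s t^s z^{ks}`. -/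
noncomputable def geomTZ {R : Type*} [CommRing R] (k : ℕ) : MvPowerSeries (Fin 2) R :=
  fun d => if d 1 = k * d 0 then 1 else 0

/-- For `k < n`, `Ψ_{1,n}(R(z)/(1 - t z^k)) = φ_{n-k}(R(z)) = ∑_s r_{s(n-k)} z^s`,
where `φ_m(∑ a_i z^i) = ∑ a_{im} z^i`. -/
theorem Psi_geom {R : Type*} [CommRing R] (r : ℕ → R) (n k : ℕ) (hkn : k < n) :
    Psi n (zSeries r * geomTZ k) = PowerSeries.mk (fun s => r (s * (n - k))) := by
  ext s
  have hsum : s * (n - k) + s * k = s * n := by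
    rw [← Nat.left_distrib, Nat.sub_add_cancel hkn.le]
  have hc : k * s = s * k := Nat.mul_comm _ _
  rw [Psi, coeff_mk, coeff_mk, MvPowerSeries.coeff_mul]
  have hd : ((Finsupp.single (1 : Fin 2) (s * (n - k)), Finsupp.single (0 : Fin 2) s + Finsupp.single 1 (s * k)) : (Fin 2 →₀ ℕ) × (Fin 2 →₀ ℕ)) ∈
      Finset.HasAntidiagonal.antidiagonal (Finsupp.single (0 : Fin 2) s + Finsupp.single 1 (s * n)) := by
    rw [Finset.HasAntidiagonal.mem_antidiagonal]
    ext x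
    fin_cases x <;> simp [Finsupp.single_apply]
    omega
  rw [Finset.sum_eq_single_of_mem _ hd]
  · simp [zSeries, geomTZ, MvPowerSeries.coeff_apply, Finsupp.single_apply, Nat.mul_comm]
  · rintro ⟨u, v⟩ hb hne
    rw [Finset.HasAntidiagonal.mem_antidiagonal] at hb
    by_contra h
    have hu0 : u 0 = 0 := by
      by_contra hu
      simp [zSeries, MvPowerSeries.coeff_apply, hu] at h
    have hv1 : v 1 = k * v 0 := by
      by_contra hv
      simp [geomTZ, MvPowerSeries.coeff_apply, hv] at h
    have h0 : u 0 + v 0 = s := by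
      have := congrFun (congrArg DFunLike.coe hb) 0
      simpa [Finsupp.single_apply] using this
    have h1 : u 1 + v 1 = s * n := by
      have := congrFun (congrArg DFunLike.coe hb) 1
      simpa [Finsupp.single_apply] using this
    apply hne
    have hv0 : v 0 = s := by omega
    have hu1 : u 1 = s * (n - k) := by
      have hv1' : v 1 = k * s := by rw [hv1, hv0]
      omega
    ext x
    · fin_cases x <;> simp [Finsupp.single_apply, hu0, hu1]
    · fin_cases x <;> simp [Finsupp.single_apply, hv0, hv1] <;> omega
end

section
/- For a polynomial R(z) and natural numbers k_1,…,k_m, n ≥ 1, we have φ_n(R(z)/∏_{i=1}^m (1 - z^{k_i})) = φ_n(R(z)·∏_{i=1}^m Q_n(z^{k_i})) / ∏_{i=1}^m (1 - z^{k_i}), where Q_n(z) = 1 + z + ⋯ + z^{n-1}. -/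
open PowerSeries

/-- `φ_n(∑ a_i z^i) = ∑ a_{in} z^i`. -/
noncomputable def phi {K : Type*} [Field K] (n : ℕ) (f : PowerSeries K) : PowerSeries K :=
  PowerSeries.mk fun i => PowerSeries.coeff (i * n) f

/-- `Q_n(z^k) = 1 + z^k + ⋯ + z^{k(n-1)}` as a power series. -/
noncomputable def Qn {K : Type*} [Field K] (n k : ℕ) : PowerSeries K :=
  ∑ j ∈ Finset.range n, (X : PowerSeries K) ^ (k * j)

lemma phi_mul_one_sub {K : Type*} [Field K] (n : ℕ) (hn : 1 ≤ n) (kk : ℕ) (f : PowerSeries K) :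
    phi n (f * (1 - (X : PowerSeries K) ^ (kk * n))) =
      phi n f * (1 - (X : PowerSeries K) ^ kk) := by
  ext i
  simp only [phi, coeff_mk, mul_sub, mul_one, map_sub, PowerSeries.coeff_mul_X_pow',
    PowerSeries.coeff_mk]
  congr 1
  by_cases h : kk ≤ i
  · rw [if_pos (Nat.mul_le_mul_right n h), if_pos h, Nat.sub_mul]
  · rw [if_neg (fun hc => h (Nat.le_of_mul_le_mul_right hc hn)), if_neg h]

lemma phi_mul_prod {K : Type*} [Field K] (n : ℕ) (hn : 1 ≤ n) {m : ℕ} (k : Fin m → ℕ)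
    (s : Finset (Fin m)) (f : PowerSeries K) :
    phi n (f * ∏ i ∈ s, (1 - (X : PowerSeries K) ^ (k i * n))) =
      phi n f * ∏ i ∈ s, (1 - (X : PowerSeries K) ^ k i) := by
  induction s using Finset.cons_induction with
  | empty => simp
  | cons a s ha ih =>
    rw [Finset.prod_cons, Finset.prod_cons, ← mul_assoc,
      mul_comm f (1 - (X : PowerSeries K) ^ (k a * n)), mul_assoc, mul_comm _ (f * _),
      phi_mul_one_sub n hn, ih]
    ring

lemma one_sub_mul_Qn {K : Type*} [Field K] (n kk : ℕ) :
    (1 - (X : PowerSeries K) ^ kk) * Qn n kk = 1 - (X : PowerSeries K) ^ (kk * n) := by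
  have : Qn n kk = ∑ j ∈ Finset.range n, ((X : PowerSeries K) ^ kk) ^ j := by
    unfold Qn; exact Finset.sum_congr rfl fun j _ => (pow_mul X kk j)
  have h := mul_geom_sum ((X : PowerSeries K) ^ kk) n
  rw [← pow_mul] at h
  rw [this]
  linear_combination -h

/-- For a polynomial `R(z)` and `k_1, …, k_m ≥ 1`, `n ≥ 1`:
`φ_n(R(z)/∏(1 - z^{k_i})) = φ_n(R(z)·∏ Q_n(z^{k_i})) / ∏(1 - z^{k_i})`. -/
theorem phi_rational {K : Type*} [Field K] (n m : ℕ) (hn : 1 ≤ n) (k : Fin m → ℕ)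
    (hk : ∀ i, 1 ≤ k i) (R : Polynomial K) :
    phi n ((R : PowerSeries K) * (∏ i, (1 - (X : PowerSeries K) ^ k i))⁻¹) =
      phi n ((R : PowerSeries K) * ∏ i, Qn n (k i)) *
        (∏ i, (1 - (X : PowerSeries K) ^ k i))⁻¹ := by
  set A : PowerSeries K := ∏ i, (1 - (X : PowerSeries K) ^ k i) with hA
  have hconst : constantCoeff A ≠ 0 := by
    rw [hA, map_prod]
    have : ∀ i : Fin m, constantCoeff (1 - (X : PowerSeries K) ^ k i) = 1 := by
      intro i
      rw [map_sub, map_one, map_pow, constantCoeff_X, zero_pow (Nat.one_le_iff_ne_zero.mp (hk i)),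
        sub_zero]
    simp [this]
  have hAinv : A * A⁻¹ = 1 := PowerSeries.mul_inv_cancel A hconst
  have hAne : A ≠ 0 := by
    intro h; rw [h, map_zero] at hconst; exact hconst rfl
  apply mul_right_cancel₀ hAne
  rw [mul_assoc, mul_comm A⁻¹ A, hAinv, mul_one]
  have hAB : A * ∏ i, Qn n (k i) = ∏ i, (1 - (X : PowerSeries K) ^ (k i * n)) := by
    rw [hA, ← Finset.prod_mul_distrib]
    exact Finset.prod_congr rfl fun i _ => one_sub_mul_Qn n (k i)
  calc phi n ((R : PowerSeries K) * A⁻¹) * A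
      = phi n ((R : PowerSeries K) * A⁻¹) * A * 1 := by rw [mul_one]
    _ = phi n ((R : PowerSeries K) * A⁻¹ * ∏ i, (1 - (X : PowerSeries K) ^ (k i * n))) := by
        rw [phi_mul_prod n hn k Finset.univ, mul_one]
    _ = phi n ((R : PowerSeries K) * ∏ i, Qn n (k i)) := by
        rw [← hAB]
        rw [show (R : PowerSeries K) * A⁻¹ * (A * ∏ i, Qn n (k i)) =
          (R : PowerSeries K) * (∏ i, Qn n (k i)) * (A * A⁻¹) by ring, hAinv, mul_one]
end

section
/- For the polynomial pi_{3,3}(z) = z^8 - z^6 + 2z^4 - z^2 + 1, the power series pi_{3,3}(z)/((1-z^2)^2(1-z^4)^3) has all coefficients nonnegative integers and is palindromic-symmetric under z ↦ 1/z up to the degree shift: z^8 pi_{3,3}(1/z) = pi_{3,3}(z). -/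
open PowerSeries

noncomputable def pi33 : Polynomial ℚ :=
  Polynomial.X ^ 8 - Polynomial.X ^ 6 + 2 * Polynomial.X ^ 4 - Polynomial.X ^ 2 + 1

noncomputable def geomS (R : Type*) [CommSemiring R] (k : ℕ) : PowerSeries R :=
  PowerSeries.mk fun n => if k ∣ n then 1 else 0

lemma geomS_inv {R : Type*} [CommRing R] (k : ℕ) (hk : k ≠ 0) :
    ((1 : PowerSeries R) - X ^ k) * geomS R k = 1 := by
  ext n
  rw [sub_mul, one_mul, map_sub]
  rcases lt_or_ge n k with h | h
  · rw [PowerSeries.coeff_X_pow_mul' ]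
    simp only [if_neg (not_le.mpr h), sub_zero]
    rcases Nat.eq_zero_or_pos n with rfl | hn
    · simp [geomS]
    · have : ¬ k ∣ n := fun hd => absurd (Nat.le_of_dvd hn hd) (not_le.mpr h)
      simp [geomS, this, hn.ne']
  · have hn : 0 < n := lt_of_lt_of_le (Nat.pos_of_ne_zero hk) h
    rw [PowerSeries.coeff_X_pow_mul', if_pos h]
    have hdvd : k ∣ n ↔ k ∣ n - k := by
      constructor
      · intro hd; exact (Nat.dvd_sub hd dvd_rfl)
      · intro hd; have := Nat.dvd_add hd dvd_rfl; rwa [Nat.sub_add_cancel h] at this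
    simp [geomS, ← hdvd, hn.ne']

noncomputable def Gnat : PowerSeries ℕ :=
  (1 + X ^ 4) * (1 + X ^ 6) * geomS ℕ 2 * (geomS ℕ 4) ^ 4

noncomputable def Gq : PowerSeries ℚ :=
  (1 + X ^ 4) * (1 + X ^ 6) * geomS ℚ 2 * (geomS ℚ 4) ^ 4

lemma map_geomS (k : ℕ) :
    PowerSeries.map (Nat.castRingHom ℚ) (geomS ℕ k) = geomS ℚ k := by
  ext n
  simp [geomS, apply_ite]

lemma Gq_eq_map : Gq = PowerSeries.map (Nat.castRingHom ℚ) Gnat := by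
  rw [Gnat, Gq]
  simp [map_geomS]

lemma pi33_coe : (pi33 : PowerSeries ℚ) =
    X ^ 8 - X ^ 6 + 2 * X ^ 4 - X ^ 2 + 1 := by
  have h2 : ((2 : Polynomial ℚ) : PowerSeries ℚ) = 2 := by
    rw [show (2 : Polynomial ℚ) = Polynomial.C 2 from (map_ofNat _ 2).symm, Polynomial.coe_C]
    exact map_ofNat _ 2
  simp only [pi33, Polynomial.coe_add, Polynomial.coe_sub, Polynomial.coe_mul,
    Polynomial.coe_pow, Polynomial.coe_X, Polynomial.coe_one, h2]

lemma key : Gq * ((1 - X ^ 2) ^ 2 * (1 - X ^ 4) ^ 3) = (pi33 : PowerSeries ℚ) := by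
  have h2 : ((1 : PowerSeries ℚ) - X ^ 2) * geomS ℚ 2 = 1 := geomS_inv 2 (by norm_num)
  have h4 : ((1 : PowerSeries ℚ) - X ^ 4) * geomS ℚ 4 = 1 := geomS_inv 4 (by norm_num)
  have hfact : ((1 : PowerSeries ℚ) + X ^ 4) * (1 + X ^ 6)
      = (1 + X ^ 2) * (pi33 : PowerSeries ℚ) := by
    rw [pi33_coe]; ring
  calc Gq * ((1 - X ^ 2) ^ 2 * (1 - X ^ 4) ^ 3)
      = ((1 + X ^ 4) * (1 + X ^ 6)) * (((1 - X ^ 2) * geomS ℚ 2)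
        * (((1 - X ^ 4) * geomS ℚ 4) ^ 3 * ((1 - X ^ 2) * geomS ℚ 4))) := by
        rw [Gq]; ring
    _ = ((1 + X ^ 2) * (pi33 : PowerSeries ℚ)) * ((1 - X ^ 2) * geomS ℚ 4) := by
        rw [h2, h4, hfact]; ring
    _ = (pi33 : PowerSeries ℚ) * ((1 - X ^ 4) * geomS ℚ 4) := by ring
    _ = (pi33 : PowerSeries ℚ) := by rw [h4, mul_one]

/-- `pi_{3,3}` is palindromic (`z^8 pi_{3,3}(1/z) = pi_{3,3}(z)`) and the power series
`pi_{3,3}(z)/((1-z^2)^2 (1-z^4)^3)` has all coefficients nonnegative integers. -/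
theorem pi33_palindromic_nonneg :
    pi33.reverse = pi33 ∧
      ∀ n : ℕ, ∃ m : ℕ,
        PowerSeries.coeff n
          ((pi33 : PowerSeries ℚ) * (((1 - X ^ 2) ^ 2 * (1 - X ^ 4) ^ 3 : PowerSeries ℚ))⁻¹)
          = (m : ℚ) := by
  constructor
  · have hdeg : pi33.natDegree = 8 := by
      unfold pi33; compute_degree!
    rw [Polynomial.reverse, hdeg]
    have : pi33 = Polynomial.X ^ 8 - Polynomial.X ^ 6 + Polynomial.C 2 * Polynomial.X ^ 4
        - Polynomial.X ^ 2 + Polynomial.X ^ 0 := by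
      rw [show (Polynomial.C 2 : Polynomial ℚ) = 2 from map_ofNat _ 2]; unfold pi33; ring
    rw [this]
    simp only [Polynomial.reflect_add, Polynomial.reflect_sub, Polynomial.reflect_C_mul,
      Polynomial.reflect_monomial]
    rw [Polynomial.revAt_le (by norm_num), Polynomial.revAt_le (by norm_num),
      Polynomial.revAt_le (by norm_num), Polynomial.revAt_le (by norm_num),
      Polynomial.revAt_le (by norm_num)]
    norm_num
    rw [show (Polynomial.C 2 : Polynomial ℚ) = 2 from map_ofNat _ 2]
    ring
  · intro n
    have hD : PowerSeries.constantCoeff ((1 - X ^ 2) ^ 2 * (1 - X ^ 4) ^ 3 : PowerSeries ℚ) ≠ 0 := by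
      simp
    have : (pi33 : PowerSeries ℚ) * (((1 - X ^ 2) ^ 2 * (1 - X ^ 4) ^ 3 : PowerSeries ℚ))⁻¹
        = Gq := by
      rw [← key, mul_assoc, PowerSeries.mul_inv_cancel _ hD, mul_one]
    rw [this, Gq_eq_map]
    exact ⟨PowerSeries.coeff n Gnat, by simp⟩
end
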